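/- The inductance map is injective on admissible twigs: if A and B are admissible twigs (all entries ≥ 2) with e(A) = e(B), then A = B. -/

import Mathlib

/-- The tridiagonal matrix associated to a twig `[m₁,…,m_r]`: diagonal entries `mᵢ`,
sub- and super-diagonal entries `-1`. -/
def tridiagMatrix (L : List ℤ) : Matrix (Fin L.length) (Fin L.length) ℤ :=
  Matrix.of fun i j =>
    if i = j then L.get i
    else if (i : ℕ) + 1 = (j : ℕ) ∨ (j : ℕ) + 1 = (i : ℕ) then -1 else 0

/-- The determinant `d(A)` of a twig; `d(∅) = 1` by the empty determinant convention. -/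
def twigDet (L : List ℤ) : ℤ := (tridiagMatrix L).det

/-- The inductance `e(A) = d(Ā)/d(A)`. -/
def inductance (L : List ℤ) : ℚ := (twigDet L.tail : ℚ) / (twigDet L : ℚ)

/-- A twig is admissible if all entries are at least 2. -/
def Admissible (L : List ℤ) : Prop := ∀ m ∈ L, (2 : ℤ) ≤ m

lemma twigDet_nil : twigDet [] = 1 := by
  simp [twigDet, Matrix.det_fin_zero]

lemma twigDet_singleton (a : ℤ) : twigDet [a] = a := by
  simp [twigDet, Matrix.det_fin_one, tridiagMatrix]

lemma tridiag_apply (L : List ℤ) (i j : Fin L.length) :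
    tridiagMatrix L i j =
      if i = j then L.get i
      else if (i : ℕ) + 1 = (j : ℕ) ∨ (j : ℕ) + 1 = (i : ℕ) then -1 else 0 := rfl

lemma submatrix_succ_succ (a : ℤ) (M : List ℤ) :
    (tridiagMatrix (a :: M)).submatrix Fin.succ Fin.succ = tridiagMatrix M := by
  ext i j
  simp only [Matrix.submatrix_apply, tridiag_apply]
  have h1 : (Fin.succ i = Fin.succ j) ↔ i = j := by
    constructor
    · exact fun h => Fin.succ_injective _ h
    · rintro rfl; rfl
  have h2 : ((Fin.succ i : ℕ) + 1 = (Fin.succ j : ℕ) ∨ (Fin.succ j : ℕ) + 1 = (Fin.succ i : ℕ))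
      ↔ ((i : ℕ) + 1 = (j : ℕ) ∨ (j : ℕ) + 1 = (i : ℕ)) := by
    simp [Fin.val_succ]
  rw [if_congr h1 rfl rfl, if_congr (Iff.rfl) rfl (if_congr h2 rfl rfl)]
  have h3 : (a :: M).get i.succ = M.get i := by
    simp [List.get_cons_succ]
  rw [h3]

lemma twigDet_cons_cons (a b : ℤ) (L : List ℤ) :
    twigDet (a :: b :: L) = a * twigDet (b :: L) - twigDet L := by
  have hM : twigDet (a :: b :: L) =
      (show Matrix (Fin (L.length + 2)) (Fin (L.length + 2)) ℤ from
        tridiagMatrix (a :: b :: L)).det := rfl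
  set M : Matrix (Fin (L.length + 2)) (Fin (L.length + 2)) ℤ :=
    tridiagMatrix (a :: b :: L) with hMdef
  have hMe : ∀ i j : Fin (L.length + 2), M i j =
      if (i : ℕ) = (j : ℕ) then (a :: b :: L).get ⟨i, i.2⟩
      else if (i : ℕ) + 1 = (j : ℕ) ∨ (j : ℕ) + 1 = (i : ℕ) then -1 else 0 := by
    intro i j
    show tridiagMatrix (a :: b :: L) ⟨i, i.2⟩ ⟨j, j.2⟩ = _
    rw [tridiag_apply]
    congr 1
    simp [Fin.ext_iff]
  have hdet : M.det = ∑ j : Fin (L.length + 2), (-1) ^ (j : ℕ) * M 0 j *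
      (M.submatrix Fin.succ j.succAbove).det := Matrix.det_succ_row_zero M
  rw [Fin.sum_univ_succ, Fin.sum_univ_succ] at hdet
  have hz : ∀ j : Fin L.length, M 0 j.succ.succ = 0 := by
    intro j
    rw [hMe]
    have h1 : ¬ ((0 : Fin (L.length+2)) : ℕ) = ((j.succ.succ : Fin (L.length+2)) : ℕ) := by
      simp [Fin.val_succ]
    rw [if_neg h1, if_neg]
    simp [Fin.val_succ]
  have hs0 : M 0 0 = a := by rw [hMe]; simp
  have hs1 : M 0 (Fin.succ 0) = -1 := by
    rw [hMe]
    simp [Fin.val_succ]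
  have e0 : (M.submatrix Fin.succ ((0 : Fin (L.length+2)).succAbove)).det
      = twigDet (b :: L) := by
    rw [Fin.succAbove_zero]
    exact congrArg Matrix.det (submatrix_succ_succ a (b :: L))
  set N : Matrix (Fin (L.length+1)) (Fin (L.length+1)) ℤ :=
    M.submatrix Fin.succ ((Fin.succ 0).succAbove) with hNdef
  have e1 : N.det = - twigDet L := by
    have hdN : N.det = ∑ i : Fin (L.length + 1), (-1) ^ (i : ℕ) * N i 0 *
        (N.submatrix i.succAbove Fin.succ).det := Matrix.det_succ_column_zero N
    rw [Fin.sum_univ_succ] at hdN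
    have hN00 : N 0 0 = -1 := by
      show M (Fin.succ 0) ((Fin.succ 0).succAbove 0) = -1
      rw [Fin.succ_succAbove_zero, hMe]
      simp [Fin.val_succ]
    have hNz : ∀ i : Fin L.length, N i.succ 0 = 0 := by
      intro i
      show M i.succ.succ ((Fin.succ 0).succAbove 0) = 0
      rw [Fin.succ_succAbove_zero, hMe]
      have : ¬ ((i.succ.succ : Fin (L.length+2)) : ℕ) = ((0 : Fin (L.length+2)) : ℕ) := by
        simp [Fin.val_succ]
      rw [if_neg this, if_neg]
      simp [Fin.val_succ]
    have hsub : N.submatrix ((0 : Fin (L.length+1)).succAbove) Fin.succ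
        = tridiagMatrix L := by
      have : N.submatrix ((0 : Fin (L.length+1)).succAbove) Fin.succ
          = ((M.submatrix Fin.succ Fin.succ).submatrix Fin.succ Fin.succ) := by
        ext i j
        simp only [Matrix.submatrix_apply, hNdef, Fin.succAbove_zero,
          Fin.succ_succAbove_succ]
      rw [this]
      have h1 : (M.submatrix Fin.succ Fin.succ) = tridiagMatrix (b :: L) :=
        submatrix_succ_succ a (b :: L)
      rw [h1]
      exact submatrix_succ_succ b L
    rw [hN00, hsub] at hdN
    simp only [hNz] at hdN
    simp at hdN
    rw [hdN]
    rfl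
  rw [hs0, hs1, e0] at hdet
  simp only [hz] at hdet
  rw [e1] at hdet
  rw [hM, hdet]
  simp
  ring

lemma admissible_tail {m : ℤ} {L : List ℤ} (h : Admissible (m :: L)) : Admissible L :=
  fun x hx => h x (List.mem_cons_of_mem m hx)

lemma twigDet_pos_aux : ∀ (L : List ℤ), Admissible L →
    0 < twigDet L ∧ ∀ a : ℤ, 2 ≤ a → twigDet L < twigDet (a :: L) := by
  intro L
  induction L with
  | nil =>
    intro _
    constructor
    · rw [twigDet_nil]; norm_num
    · intro a ha
      rw [twigDet_nil, twigDet_singleton]; omega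
  | cons b L ih =>
    intro h
    have hb : (2:ℤ) ≤ b := h b List.mem_cons_self
    obtain ⟨h1, h2⟩ := ih (admissible_tail h)
    have h3 : twigDet L < twigDet (b :: L) := h2 b hb
    have hpos : 0 < twigDet (b :: L) := lt_trans h1 h3
    refine ⟨hpos, fun a ha => ?_⟩
    rw [twigDet_cons_cons]
    nlinarith

lemma twigDet_pos {L : List ℤ} (h : Admissible L) : 0 < twigDet L :=
  (twigDet_pos_aux L h).1

lemma twigDet_tail_lt {m : ℤ} {L : List ℤ} (h : Admissible (m :: L)) :
    twigDet L < twigDet (m :: L) :=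
  (twigDet_pos_aux L (admissible_tail h)).2 m (h m List.mem_cons_self)

noncomputable def EE (L : List ℤ) : ℚ := if L = [] then 0 else inductance L

lemma inductance_pos {L : List ℤ} (h : Admissible L) (hne : L ≠ []) :
    0 < inductance L := by
  obtain ⟨m, L', rfl⟩ := List.exists_cons_of_ne_nil hne
  have h1 : 0 < twigDet L' := twigDet_pos (admissible_tail h)
  have h2 : 0 < twigDet (m :: L') := twigDet_pos h
  unfold inductance
  simp only [List.tail_cons]
  positivity

lemma inductance_lt_one {L : List ℤ} (h : Admissible L) (hne : L ≠ []) :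
    inductance L < 1 := by
  obtain ⟨m, L', rfl⟩ := List.exists_cons_of_ne_nil hne
  have h1 : twigDet L' < twigDet (m :: L') := twigDet_tail_lt h
  have h2 : 0 < twigDet (m :: L') := twigDet_pos h
  unfold inductance
  simp only [List.tail_cons]
  rw [div_lt_one (by exact_mod_cast h2)]
  exact_mod_cast h1

lemma EE_nonneg {L : List ℤ} (h : Admissible L) : 0 ≤ EE L := by
  unfold EE
  split
  · exact le_refl 0
  · exact le_of_lt (inductance_pos h (by assumption))

lemma EE_lt_one {L : List ℤ} (h : Admissible L) : EE L < 1 := by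
  unfold EE
  split
  · norm_num
  · exact inductance_lt_one h (by assumption)

lemma inductance_cons (m : ℤ) (L : List ℤ) (hL : Admissible L) (hm : 2 ≤ m) :
    inductance (m :: L) = 1 / ((m : ℚ) - EE L) := by
  have hmL : Admissible (m :: L) := by
    intro x hx
    rcases List.mem_cons.mp hx with rfl | hx
    · exact hm
    · exact hL x hx
  have hpos : 0 < twigDet (m :: L) := twigDet_pos hmL
  have hpos' : 0 < twigDet L := twigDet_pos hL
  cases L with
  | nil =>
    unfold inductance EE
    simp [twigDet_nil, twigDet_singleton, one_div]
  | cons b L' =>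
    have hb : 0 < twigDet (b :: L') := hpos'
    have hEE : EE (b :: L') = (twigDet L' : ℚ) / (twigDet (b :: L') : ℚ) := by
      unfold EE inductance
      simp
    rw [hEE]
    unfold inductance
    simp only [List.tail_cons]
    rw [twigDet_cons_cons] at hpos ⊢
    have hne1 : (twigDet (b :: L') : ℚ) ≠ 0 := by exact_mod_cast ne_of_gt hb
    have hne2 : ((m * twigDet (b :: L') - twigDet L' : ℤ) : ℚ) ≠ 0 := by
      exact_mod_cast ne_of_gt hpos
    push_cast at hne2 ⊢
    have hden : (m:ℚ) - (twigDet L' : ℚ)/(twigDet (b::L') : ℚ) ≠ 0 := by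
      rw [sub_ne_zero]
      intro hc
      rw [eq_div_iff hne1] at hc
      apply hne2
      rw [← hc]
      ring
    rw [div_eq_div_iff hne2 hden]
    field_simp

lemma inductance_inj_aux : ∀ (A B : List ℤ), Admissible A → A ≠ [] →
    Admissible B → B ≠ [] → inductance A = inductance B → A = B := by
  intro A
  induction A with
  | nil => intro B hA hAne; exact absurd rfl hAne
  | cons a A' ih =>
    intro B hA _ hB hBne h
    obtain ⟨b, B', rfl⟩ := List.exists_cons_of_ne_nil hBne
    have ha : (2:ℤ) ≤ a := hA a List.mem_cons_self
    have hb : (2:ℤ) ≤ b := hB b List.mem_cons_self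
    have hA' : Admissible A' := admissible_tail hA
    have hB' : Admissible B' := admissible_tail hB
    rw [inductance_cons a A' hA' ha, inductance_cons b B' hB' hb] at h
    have hEA0 := EE_nonneg hA'
    have hEA1 := EE_lt_one hA'
    have hEB0 := EE_nonneg hB'
    have hEB1 := EE_lt_one hB'
    have haq : (2:ℚ) ≤ (a:ℚ) := by exact_mod_cast ha
    have hbq : (2:ℚ) ≤ (b:ℚ) := by exact_mod_cast hb
    have hda : (0:ℚ) < (a:ℚ) - EE A' := by linarith
    have hdb : (0:ℚ) < (b:ℚ) - EE B' := by linarith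
    rw [div_eq_div_iff (ne_of_gt hda) (ne_of_gt hdb)] at h
    have hden : (a:ℚ) - EE A' = (b:ℚ) - EE B' := by linarith
    have hab : a = b := by
      have h1 : |((a - b : ℤ) : ℚ)| < 1 := by
        push_cast
        rw [abs_lt]
        constructor <;> linarith
      have h2 : |a - b| < 1 := by exact_mod_cast h1
      rcases abs_lt.mp h2 with ⟨h3, h4⟩
      omega
    subst hab
    have hEE : EE A' = EE B' := by linarith
    by_cases hA'e : A' = []
    · by_cases hB'e : B' = []
      · rw [hA'e, hB'e]
      · exfalso
        unfold EE at hEE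
        rw [if_pos hA'e, if_neg hB'e] at hEE
        have := inductance_pos hB' hB'e
        linarith
    · by_cases hB'e : B' = []
      · exfalso
        unfold EE at hEE
        rw [if_neg hA'e, if_pos hB'e] at hEE
        have := inductance_pos hA' hA'e
        linarith
      · have heq : inductance A' = inductance B' := by
          unfold EE at hEE
          rw [if_neg hA'e, if_neg hB'e] at hEE
          exact hEE
        rw [ih B' hA' hA'e hB' hB'e heq]

/-- The inductance map is injective on (nonempty) admissible twigs. -/
theorem inductance_injective (A B : List ℤ) (hA : Admissible A) (hAne : A ≠ [])
    (hB : Admissible B) (hBne : B ≠ []) (h : inductance A = inductance B) :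
    A = B :=
  inductance_inj_aux A B hA hAne hB hBne h
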